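/- Let L be a finite-dimensional minimal nonnilpotent left Leibniz algebra with self-normalizing maximal subalgebra M of core N. Then either L is generated by a single element (cyclic), or Leib(L) ⊆ N. -/

import Mathlib

set_option linter.unnecessarySimpa false

/-- The left Leibniz identity for a bilinear bracket `B`. -/
def LeibnizId {F L : Type*} [Field F] [AddCommGroup L] [Module F L]
    (B : L →ₗ[F] L →ₗ[F] L) : Prop :=
  ∀ a b c : L, B a (B b c) = B (B a b) c + B b (B a c)

/-- The span of all brackets `[s,t]` with `s ∈ S`, `t ∈ T`. -/
def lbrk {F L : Type*} [Field F] [AddCommGroup L] [Module F L]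
    (B : L →ₗ[F] L →ₗ[F] L) (S T : Submodule F L) : Submodule F L :=
  Submodule.span F {z : L | ∃ s ∈ S, ∃ t ∈ T, z = B s t}

/-- A subspace closed under the bracket. -/
def IsLeibSubalg {F L : Type*} [Field F] [AddCommGroup L] [Module F L]
    (B : L →ₗ[F] L →ₗ[F] L) (S : Submodule F L) : Prop :=
  ∀ x ∈ S, ∀ y ∈ S, B x y ∈ S

/-- A (two-sided) ideal. -/
def IsLeibIdeal {F L : Type*} [Field F] [AddCommGroup L] [Module F L]
    (B : L →ₗ[F] L →ₗ[F] L) (S : Submodule F L) : Prop :=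
  (∀ x : L, ∀ y ∈ S, B x y ∈ S) ∧ (∀ y ∈ S, ∀ x : L, B y x ∈ S)

/-- Lower central series: `L^1 = L`, `L^{n+1} = [L, L^n]`. -/
def leibLCS {F L : Type*} [Field F] [AddCommGroup L] [Module F L]
    (B : L →ₗ[F] L →ₗ[F] L) : ℕ → Submodule F L
  | 0 => ⊤
  | n + 1 => lbrk B ⊤ (leibLCS B n)

def LeibIsNilpotent {F L : Type*} [Field F] [AddCommGroup L] [Module F L]
    (B : L →ₗ[F] L →ₗ[F] L) : Prop :=
  ∃ n, leibLCS B n = ⊥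

/-- Lower central series of a subalgebra `S`. -/
def leibLCSIn {F L : Type*} [Field F] [AddCommGroup L] [Module F L]
    (B : L →ₗ[F] L →ₗ[F] L) (S : Submodule F L) : ℕ → Submodule F L
  | 0 => S
  | n + 1 => lbrk B S (leibLCSIn B S n)

/-- A subalgebra `S` is nilpotent (as an algebra in its own right). -/
def LeibSubalgNilpotent {F L : Type*} [Field F] [AddCommGroup L] [Module F L]
    (B : L →ₗ[F] L →ₗ[F] L) (S : Submodule F L) : Prop :=
  ∃ n, leibLCSIn B S n = ⊥

/-- Derived series. -/
def leibDerived {F L : Type*} [Field F] [AddCommGroup L] [Module F L]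
    (B : L →ₗ[F] L →ₗ[F] L) : ℕ → Submodule F L
  | 0 => ⊤
  | n + 1 => lbrk B (leibDerived B n) (leibDerived B n)

def LeibIsSolvable {F L : Type*} [Field F] [AddCommGroup L] [Module F L]
    (B : L →ₗ[F] L →ₗ[F] L) : Prop :=
  ∃ n, leibDerived B n = ⊥

/-- The normalizer of a subspace `S`: elements `x` with `[x,S] ⊆ S` and `[S,x] ⊆ S`. -/
def leibNormalizer {F L : Type*} [Field F] [AddCommGroup L] [Module F L]
    (B : L →ₗ[F] L →ₗ[F] L) (S : Submodule F L) : Submodule F L where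
  carrier := {x : L | ∀ m ∈ S, B x m ∈ S ∧ B m x ∈ S}
  add_mem' := by
    intro x y hx hy m hm
    constructor
    · have := S.add_mem (hx m hm).1 (hy m hm).1
      simpa [map_add] using this
    · have := S.add_mem (hx m hm).2 (hy m hm).2
      simpa [map_add] using this
  zero_mem' := by
    intro m hm
    constructor
    · simpa [map_zero] using S.zero_mem
    · simpa [map_zero] using S.zero_mem
  smul_mem' := by
    intro c x hx m hm
    constructor
    · have := S.smul_mem c (hx m hm).1
      simpa [map_smul] using this
    · have := S.smul_mem c (hx m hm).2
      simpa [map_smul] using this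

/-- `Leib(L)`: the span of all squares. -/
def leibLeib {F L : Type*} [Field F] [AddCommGroup L] [Module F L]
    (B : L →ₗ[F] L →ₗ[F] L) : Submodule F L :=
  Submodule.span F {z : L | ∃ y : L, z = B y y}

/-- A maximal (proper) subalgebra. -/
def IsMaxSubalg {F L : Type*} [Field F] [AddCommGroup L] [Module F L]
    (B : L →ₗ[F] L →ₗ[F] L) (S : Submodule F L) : Prop :=
  IsLeibSubalg B S ∧ S ≠ ⊤ ∧ ∀ T : Submodule F L, IsLeibSubalg B T → S < T → T = ⊤

/-- `N` is the core of `M`: the largest ideal of `L` contained in `M`. -/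
def IsCore {F L : Type*} [Field F] [AddCommGroup L] [Module F L]
    (B : L →ₗ[F] L →ₗ[F] L) (M N : Submodule F L) : Prop :=
  IsLeibIdeal B N ∧ N ≤ M ∧ ∀ C : Submodule F L, IsLeibIdeal B C → C ≤ M → C ≤ N

/-- Minimal nonnilpotent: nonnilpotent, solvable, all proper subalgebras nilpotent. -/
def MinNonnilpotent {F L : Type*} [Field F] [AddCommGroup L] [Module F L]
    (B : L →ₗ[F] L →ₗ[F] L) : Prop :=
  ¬ LeibIsNilpotent B ∧ LeibIsSolvable B ∧
    ∀ S : Submodule F L, IsLeibSubalg B S → S ≠ ⊤ → LeibSubalgNilpotent B S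

/-- Cyclic: generated as an algebra by a single element. -/
def LeibCyclic {F L : Type*} [Field F] [AddCommGroup L] [Module F L]
    (B : L →ₗ[F] L →ₗ[F] L) : Prop :=
  ∃ z : L, ∀ S : Submodule F L, IsLeibSubalg B S → z ∈ S → S = ⊤

/-!
Squares are left annihilators (`[[y,y],x] = 0` by the Leibniz identity), so `Leib(L)` is an
ideal; if it lies in `M` it lies in the core `N`. Otherwise `M + Leib(L) = L` by maximality.
If `L` is not cyclic, each `z` lies in a proper, hence nilpotent, subalgebra, so `z` is killed by
a power of `L_z`. For `m ∈ M` and `q ∈ Leib(L)` we have `L_{m+q} = L_m`, which is nilpotent on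
`M` and on `q = (m + q) - m`, hence on `L`. The left multiplications form a Lie subalgebra of
`End(L)`, so Engel's theorem makes `L` nilpotent, a contradiction.
-/

section

variable {F L : Type*} [Field F] [AddCommGroup L] [Module F L] {B : L →ₗ[F] L →ₗ[F] L}

theorem mem_lbrk {S T : Submodule F L} {s t : L} (hs : s ∈ S) (ht : t ∈ T) :
    B s t ∈ lbrk B S T :=
  Submodule.subset_span ⟨s, hs, t, ht, rfl⟩

theorem lbrk_le {S T U : Submodule F L} (h : ∀ s ∈ S, ∀ t ∈ T, B s t ∈ U) :
    lbrk B S T ≤ U :=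
  Submodule.span_le.2 fun _ ⟨s, hs, t, ht, hz⟩ ↦ hz ▸ h s hs t ht

namespace LeibnizId

theorem lie_eq_apply (hB : LeibnizId B) (a b : L) : ⁅B a, B b⁆ = B (B a b) := by
  ext c
  simp [Ring.lie_def, hB a b c]

theorem apply_self_apply (hB : LeibnizId B) (y x : L) : B (B y y) x = 0 := by
  simpa using (hB y y x).symm

theorem apply_eq_zero_of_mem_leibLeib (hB : LeibnizId B) {q : L} (hq : q ∈ leibLeib B) :
    B q = 0 := by
  induction hq using Submodule.span_induction with
  | mem _ h => obtain ⟨y, rfl⟩ := h; ext x; exact hB.apply_self_apply y x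
  | zero => simp
  | add _ _ _ _ h₁ h₂ => simp [h₁, h₂]
  | smul _ _ _ h => simp [h]

end LeibnizId

theorem apply_add_apply_mem_leibLeib (u v : L) : B u v + B v u ∈ leibLeib B := by
  have h : B u v + B v u = B (u + v) (u + v) - B u u - B v v := by
    simp only [map_add, LinearMap.add_apply]; abel
  rw [h]
  refine sub_mem (sub_mem ?_ ?_) ?_ <;> exact Submodule.subset_span ⟨_, rfl⟩

theorem LeibnizId.isLeibIdeal_leibLeib (hB : LeibnizId B) : IsLeibIdeal B (leibLeib B) := by
  refine ⟨fun x q hq ↦ ?_, fun q hq x ↦ by simp [hB.apply_eq_zero_of_mem_leibLeib hq]⟩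
  induction hq using Submodule.span_induction with
  | mem _ h =>
    obtain ⟨y, rfl⟩ := h
    rw [hB x y y]
    exact apply_add_apply_mem_leibLeib _ _
  | zero => simp
  | add _ _ _ _ h₁ h₂ => simpa using add_mem h₁ h₂
  | smul _ _ _ h => simpa using Submodule.smul_mem _ _ h

theorem IsLeibSubalg.sup_of_isLeibIdeal {S I : Submodule F L} (hS : IsLeibSubalg B S)
    (hI : IsLeibIdeal B I) : IsLeibSubalg B (S ⊔ I) := by
  intro x hx y hy
  obtain ⟨s, hs, i, hi, rfl⟩ := Submodule.mem_sup.1 hx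
  obtain ⟨s', hs', i', hi', rfl⟩ := Submodule.mem_sup.1 hy
  rw [show B (s + i) (s' + i') = B s s' + (B s i' + B i (s' + i')) by
    simp only [map_add, LinearMap.add_apply]; abel]
  exact Submodule.add_mem_sup (hS s hs s' hs') (add_mem (hI.1 s i' hi') (hI.2 i hi _))

theorem IsMaxSubalg.sup_eq_top {M I : Submodule F L} (hM : IsMaxSubalg B M)
    (hI : IsLeibIdeal B I) (hIM : ¬ I ≤ M) : M ⊔ I = ⊤ :=
  hM.2.2 _ (hM.1.sup_of_isLeibIdeal hI) (left_lt_sup.2 hIM)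

theorem pow_apply_mem_leibLCSIn {S : Submodule F L} {m y : L} (hm : m ∈ S) (hy : y ∈ S) :
    ∀ k, (B m ^ k) y ∈ leibLCSIn B S k
  | 0 => hy
  | k + 1 => by
    rw [pow_succ', Module.End.mul_apply]
    exact mem_lbrk hm (pow_apply_mem_leibLCSIn hm hy k)

theorem LeibSubalgNilpotent.le_maxGenEigenspace {S : Submodule F L}
    (hS : LeibSubalgNilpotent B S) {m : L} (hm : m ∈ S) :
    S ≤ Module.End.maxGenEigenspace (B m) 0 := by
  obtain ⟨n, hn⟩ := hS
  intro y hy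
  simp only [Module.End.mem_maxGenEigenspace, zero_smul, sub_zero]
  exact ⟨n, by simpa [hn] using pow_apply_mem_leibLCSIn (B := B) hm hy n⟩

section Engel

attribute [local instance] LieRing.ofAssociativeRing

theorem leibLCS_le_lowerCentralSeries (E : LieSubalgebra F (Module.End F L))
    (hE : ∀ x, B x ∈ E) (k : ℕ) :
    leibLCS B k ≤ (LieModule.lowerCentralSeries F E L k).toSubmodule := by
  induction k with
  | zero => simp [leibLCS]
  | succ k ih =>
    refine lbrk_le fun x _ y hy ↦ ?_
    rw [LieModule.lowerCentralSeries_succ]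
    exact LieSubmodule.lie_mem_lie (x := (⟨B x, hE x⟩ : E)) (LieSubmodule.mem_top _) (ih hy)

theorem LeibnizId.leibIsNilpotent [FiniteDimensional F L] (hB : LeibnizId B)
    (h : ∀ x, IsNilpotent (B x)) : LeibIsNilpotent B := by
  let E : LieSubalgebra F (Module.End F L) :=
    { LinearMap.range B with
      lie_mem' := by
        rintro _ _ ⟨a, rfl⟩ ⟨b, rfl⟩
        exact ⟨B a b, (hB.lie_eq_apply a b).symm⟩ }
  have hE : LieModule.IsNilpotent E L := by
    rw [LieModule.isNilpotent_iff_forall' (R := F)]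
    rintro ⟨_, a, rfl⟩
    exact h a
  obtain ⟨k, hk⟩ := (LieModule.isNilpotent_iff F E L).1 hE
  refine ⟨k, le_bot_iff.1 ?_⟩
  simpa [hk] using leibLCS_le_lowerCentralSeries E (fun x ↦ ⟨x, rfl⟩) k

end Engel

theorem mem_maxGenEigenspace_self_of_not_leibCyclic
    (hnil : ∀ S : Submodule F L, IsLeibSubalg B S → S ≠ ⊤ → LeibSubalgNilpotent B S)
    (hcyc : ¬ LeibCyclic B) (z : L) : z ∈ Module.End.maxGenEigenspace (B z) 0 := by
  simp only [LeibCyclic, not_exists, not_forall] at hcyc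
  obtain ⟨S, hS, hzS, hSne⟩ := hcyc z
  exact (hnil S hS hSne).le_maxGenEigenspace hzS hzS

theorem LeibnizId.isNilpotent_of_sup_leibLeib_eq_top [FiniteDimensional F L]
    (hB : LeibnizId B) (hpow : ∀ z, z ∈ Module.End.maxGenEigenspace (B z) 0)
    {M : Submodule F L} (hM : LeibSubalgNilpotent B M) (hML : M ⊔ leibLeib B = ⊤) (x : L) :
    IsNilpotent (B x) := by
  obtain ⟨m, hm, q, hq, rfl⟩ :=
    Submodule.mem_sup.1 (hML ▸ Submodule.mem_top : x ∈ M ⊔ leibLeib B)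
  have hBm : ∀ q ∈ leibLeib B, B (m + q) = B m := fun q hq ↦ by
    simp [hB.apply_eq_zero_of_mem_leibLeib hq]
  have hLeib : leibLeib B ≤ Module.End.maxGenEigenspace (B m) 0 := fun q hq ↦ by
    have := hpow (m + q)
    rw [hBm q hq] at this
    simpa using sub_mem this (hM.le_maxGenEigenspace hm hm)
  have htop : Module.End.maxGenEigenspace (B m) 0 = ⊤ :=
    top_le_iff.1 (hML ▸ sup_le (hM.le_maxGenEigenspace hm) hLeib)
  rw [hBm q hq, Module.End.isNilpotent_iff_of_finite]
  intro y
  simpa using htop.ge (Submodule.mem_top (x := y))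

end

theorem stmt10_general {F L : Type*} [Field F] [AddCommGroup L] [Module F L] [FiniteDimensional F L]
    (B : L →ₗ[F] L →ₗ[F] L) (hB : LeibnizId B) (hmin : MinNonnilpotent B)
    (M N : Submodule F L) (hM : IsMaxSubalg B M)
    (hN : IsCore B M N) :
    LeibCyclic B ∨ leibLeib B ≤ N := by
  by_cases hLeib : leibLeib B ≤ M
  · exact Or.inr (hN.2.2 _ hB.isLeibIdeal_leibLeib hLeib)
  refine Or.inl (by_contra fun hcyc ↦ hmin.1 (hB.leibIsNilpotent fun x ↦ ?_))
  exact hB.isNilpotent_of_sup_leibLeib_eq_top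
    (mem_maxGenEigenspace_self_of_not_leibCyclic hmin.2.2 hcyc) (hmin.2.2 M hM.1 hM.2.1)
    (hM.sup_eq_top hB.isLeibIdeal_leibLeib hLeib) x

/-- for minimal nonnilpotent `L` with self-normalizing maximal subalgebra `M`
of core `N`, either `L` is cyclic or `Leib(L) ⊆ N`. -/
theorem stmt10 {F L : Type*} [Field F] [AddCommGroup L] [Module F L] [FiniteDimensional F L]
    (B : L →ₗ[F] L →ₗ[F] L) (hB : LeibnizId B) (hmin : MinNonnilpotent B)
    (M N : Submodule F L) (hM : IsMaxSubalg B M) (hself : leibNormalizer B M = M)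
    (hN : IsCore B M N) :
    LeibCyclic B ∨ leibLeib B ≤ N :=
  stmt10_general B hB hmin M N hM hN
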